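/- arXiv:2103.00681 — 3 statements merged into one kernel-verified Lean document; each statement's English description precedes it below -/
import Mathlib

section
/- For all ξ, η ∈ ℝ and δ ≥ 0, the quantity m(ξ,η) := (e^{δ⟨ξ⟩^{1/2}} − e^{δ⟨η⟩^{1/2}}) · e^{−δ⟨ξ−η⟩^{1/2} − δ⟨η⟩^{1/2}} satisfies |m(ξ,η)| ≤ δ |ξ−η| / (⟨ξ⟩^{1/2} + ⟨η⟩^{1/2}). -/
/-!
Write `a = ⟨ξ⟩^{1/2}`, `b = ⟨η⟩^{1/2}`, `c = ⟨ξ-η⟩^{1/2}`. Since `⟨x⟩ = |1 + x i|`, the bracket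
is 1-Lipschitz and subadditive; with subadditivity of `√` this gives `a ≤ c + b`, so the weight
`e^{-δc-δb}` absorbs `e^{δ max(a,b)}` and the mean value bound for `exp` leaves `|m| ≤ δ|a-b|`.
Finally `|a-b|(a+b) = |⟨ξ⟩-⟨η⟩| ≤ |ξ-η|`.
-/

open Real

lemma sqrt_one_add_sq_eq_norm (x : ℝ) : √(1 + x ^ 2) = ‖(1 + x * Complex.I : ℂ)‖ := by
  simpa using (Complex.norm_add_mul_I 1 x).symm

lemma abs_sqrt_one_add_sq_sub_le (x y : ℝ) : |√(1 + x ^ 2) - √(1 + y ^ 2)| ≤ |x - y| := by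
  rw [sqrt_one_add_sq_eq_norm, sqrt_one_add_sq_eq_norm]
  calc _ ≤ ‖(1 + x * Complex.I) - (1 + y * Complex.I)‖ := abs_norm_sub_norm_le _ _
    _ = |x - y| := by
        rw [add_sub_add_left_eq_sub, ← sub_mul, ← Complex.ofReal_sub, norm_mul, Complex.norm_I,
          mul_one, Complex.norm_real, norm_eq_abs]

lemma sqrt_one_add_sq_add_le (x y : ℝ) : √(1 + (x + y) ^ 2) ≤ √(1 + x ^ 2) + √(1 + y ^ 2) := by
  rw [sqrt_one_add_sq_eq_norm, sqrt_one_add_sq_eq_norm]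
  calc _ = ‖(1 + x * Complex.I) + y * Complex.I‖ := by push_cast; ring_nf
    _ ≤ ‖1 + x * Complex.I‖ + |y| := by simpa using norm_add_le (1 + x * Complex.I) (y * Complex.I)
    _ ≤ ‖1 + x * Complex.I‖ + √(1 + y ^ 2) := by gcongr; exact abs_le_sqrt (by linarith)

lemma sqrt_add_le_sqrt_add_sqrt (p q : ℝ) : √(p + q) ≤ √p + √q := by
  rw [sqrt_le_left (by positivity)]
  nlinarith [sq_sqrt' (x := p), sq_sqrt' (x := q), le_max_left p 0, le_max_left q 0,
    mul_nonneg (sqrt_nonneg p) (sqrt_nonneg q)]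

lemma abs_sqrt_sub_sqrt_mul_add {u v : ℝ} (hu : 0 ≤ u) (hv : 0 ≤ v) :
    |√u - √v| * (√u + √v) = |u - v| := by
  rw [← abs_of_nonneg (add_nonneg (sqrt_nonneg u) (sqrt_nonneg v)), ← abs_mul]
  congr 1
  linear_combination sq_sqrt hu - sq_sqrt hv

lemma abs_exp_sub_exp_le (x y : ℝ) : |exp x - exp y| ≤ |x - y| * exp (max x y) := by
  wlog h : y ≤ x generalizing x y
  · simpa [abs_sub_comm, max_comm] using this y x (le_of_not_ge h)
  rw [abs_of_nonneg (sub_nonneg.2 (exp_le_exp.2 h)), abs_of_nonneg (sub_nonneg.2 h), max_eq_left h]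
  have : 1 - (x - y) ≤ exp (y - x) := by linarith [add_one_le_exp (y - x)]
  calc exp x - exp y = exp x * (1 - exp (y - x)) := by rw [mul_sub, ← exp_add]; ring_nf
    _ ≤ exp x * (x - y) := mul_le_mul_of_nonneg_left (by linarith) (exp_pos x).le
    _ = (x - y) * exp x := mul_comm _ _

lemma abs_exp_sub_exp_mul_exp_neg_le {x y z : ℝ} (hz : 0 ≤ z) (hxz : x ≤ z + y) :
    |(exp x - exp y) * exp (-z - y)| ≤ |x - y| := by
  rw [abs_mul, abs_of_pos (exp_pos _)]
  calc _ ≤ |x - y| * exp (max x y) * exp (-z - y) := by gcongr; exact abs_exp_sub_exp_le x y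
    _ = |x - y| * exp (max x y - z - y) := by rw [mul_assoc, ← exp_add]; ring_nf
    _ ≤ |x - y| * 1 := by
        gcongr
        exact exp_le_one_iff.2 (by linarith [max_le hxz (show y ≤ z + y by linarith)])
    _ = |x - y| := mul_one _

/-- Bound on the symbol `m(ξ,η)` appearing in the commutator estimate. -/
theorem symbol_m_bound (δ : ℝ) (hδ : 0 ≤ δ) (ξ η : ℝ) :
    |(Real.exp (δ * Real.sqrt (Real.sqrt (1 + ξ ^ 2))) -
        Real.exp (δ * Real.sqrt (Real.sqrt (1 + η ^ 2)))) *
      Real.exp (-(δ * Real.sqrt (Real.sqrt (1 + (ξ - η) ^ 2))) -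
        δ * Real.sqrt (Real.sqrt (1 + η ^ 2)))| ≤
      δ * |ξ - η| / (Real.sqrt (Real.sqrt (1 + ξ ^ 2)) + Real.sqrt (Real.sqrt (1 + η ^ 2))) := by
  set a := √√(1 + ξ ^ 2)
  set b := √√(1 + η ^ 2)
  set c := √√(1 + (ξ - η) ^ 2)
  have hacb : a ≤ c + b :=
    (sqrt_le_sqrt (by simpa using sqrt_one_add_sq_add_le (ξ - η) η)).trans
      (sqrt_add_le_sqrt_add_sqrt _ _)
  have hm : |(exp (δ * a) - exp (δ * b)) * exp (-(δ * c) - δ * b)| ≤ δ * |a - b| := by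
    have := abs_exp_sub_exp_mul_exp_neg_le (mul_nonneg hδ (sqrt_nonneg _))
      (show δ * a ≤ δ * c + δ * b by rw [← mul_add]; exact mul_le_mul_of_nonneg_left hacb hδ)
    rwa [← mul_sub, abs_mul δ, abs_of_nonneg hδ] at this
  have hab : |a - b| * (a + b) ≤ |ξ - η| := by
    rw [abs_sqrt_sub_sqrt_mul_add (sqrt_nonneg _) (sqrt_nonneg _)]
    exact abs_sqrt_one_add_sq_sub_le ξ η
  calc _ ≤ δ * |a - b| := hm
    _ ≤ δ * |ξ - η| / (a + b) := by
        rw [le_div_iff₀ (by positivity), mul_assoc]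
        exact mul_le_mul_of_nonneg_left hab hδ
end

section
/- Let d ≥ 0 be an integer and let u : ℝᵈ × ℝ₊ → ℝ be smooth and decay to zero sufficiently fast as y → +∞. Then for Ψ(y) := y²/(8⟨t⟩) with ⟨t⟩ = (1+t²)^{1/2} fixed, one has ∫_{ℝᵈ×ℝ₊} |∂_y u(X,y)|² e^{2Ψ} dX dy ≥ (1/(2⟨t⟩)) ∫_{ℝᵈ×ℝ₊} |u(X,y)|² e^{2Ψ} dX dy. -/
open MeasureTheory Filter Real Set

/-- One-dimensional weighted Poincaré inequality on the half line. -/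
lemma weighted_poincare_oneDim (s : ℝ) (hs : 0 < s) (f : ℝ → ℝ) (hf : ContDiff ℝ (⊤ : ℕ∞) f)
    (h2 : IntegrableOn (fun y => f y ^ 2 * Real.exp (2 * (y ^ 2 / (8 * s)))) (Ioi 0))
    (h1 : IntegrableOn (fun y => deriv f y ^ 2 * Real.exp (2 * (y ^ 2 / (8 * s)))) (Ioi 0)) :
    1 / (2 * s) * ∫ y in Ioi (0 : ℝ), f y ^ 2 * Real.exp (2 * (y ^ 2 / (8 * s))) ≤
      ∫ y in Ioi (0 : ℝ), deriv f y ^ 2 * Real.exp (2 * (y ^ 2 / (8 * s))) := by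
  set E : ℝ → ℝ := fun y => Real.exp (2 * (y ^ 2 / (8 * s))) with hE
  have hEc : Continuous E := by fun_prop
  have hfc : Continuous f := hf.continuous
  have hf'c : Continuous (deriv f) := hf.continuous_deriv (by simp)
  -- derivative of the weight
  have hEd : ∀ y : ℝ, HasDerivAt E (y / (2 * s) * E y) y := by
    intro y
    have hin : HasDerivAt (fun y : ℝ => 2 * (y ^ 2 / (8 * s))) (y / (2 * s)) y := by
      have := ((hasDerivAt_pow 2 y).div_const (8 * s)).const_mul 2
      refine this.congr_deriv ?_
      field_simp
      ring
    simpa [hE, mul_comm] using hin.exp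
  set F : ℝ → ℝ := fun y => 1 / (2 * s) * (y * f y ^ 2 * E y) with hF
  set D : ℝ → ℝ := fun y =>
    1 / (2 * s) * ((1 * f y ^ 2 + y * (2 * f y * deriv f y)) * E y
      + y * f y ^ 2 * (y / (2 * s) * E y)) with hD
  have hFd : ∀ y : ℝ, HasDerivAt F (D y) y := by
    intro y
    have hfy : HasDerivAt f (deriv f y) y :=
      ((hf.differentiable (by simp)) y).hasDerivAt
    have hf2 : HasDerivAt (fun y => f y ^ 2) (2 * f y * deriv f y) y := by
      simpa [mul_comm, mul_assoc] using hfy.fun_pow 2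
    exact (((hasDerivAt_id y).mul hf2).mul (hEd y)).const_mul (1 / (2 * s))
  have hDc : Continuous D := by fun_prop
  set Q : ℝ → ℝ := fun y => (deriv f y + 1 / (2 * s) * y * f y) ^ 2 * E y with hQ
  have hQc : Continuous Q := by fun_prop
  set g2 : ℝ → ℝ := fun y => f y ^ 2 * E y with hg2
  set g1 : ℝ → ℝ := fun y => deriv f y ^ 2 * E y with hg1
  have hg2c : Continuous g2 := by fun_prop
  have hg1c : Continuous g1 := by fun_prop
  -- pointwise algebraic identity
  have hid : ∀ y : ℝ, D y = Q y + 1 / (2 * s) * g2 y - g1 y := by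
    intro y
    simp only [hD, hQ, hg2, hg1]
    field_simp
    ring
  -- key finite-interval inequality
  have key : ∀ R : ℝ, 0 ≤ R →
      1 / (2 * s) * (∫ y in (0:ℝ)..R, g2 y) - (∫ y in (0:ℝ)..R, g1 y) ≤ F R := by
    intro R hR
    have hFTC : ∫ y in (0:ℝ)..R, D y = F R - F 0 :=
      intervalIntegral.integral_eq_sub_of_hasDerivAt (fun y _ => hFd y)
        (hDc.intervalIntegrable 0 R)
    have hF0 : F 0 = 0 := by simp [hF]
    have hsplit : ∫ y in (0:ℝ)..R, D y
        = (∫ y in (0:ℝ)..R, Q y) + 1 / (2 * s) * (∫ y in (0:ℝ)..R, g2 y)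
          - (∫ y in (0:ℝ)..R, g1 y) := by
      rw [intervalIntegral.integral_congr (g := fun y => Q y + 1 / (2 * s) * g2 y - g1 y)
        (fun y _ => hid y)]
      rw [intervalIntegral.integral_sub
        ((hQc.intervalIntegrable 0 R).add ((hg2c.intervalIntegrable 0 R).const_mul _))
        (hg1c.intervalIntegrable 0 R),
        intervalIntegral.integral_add (hQc.intervalIntegrable 0 R)
        ((hg2c.intervalIntegrable 0 R).const_mul _),
        intervalIntegral.integral_const_mul]
    have hQpos : 0 ≤ ∫ y in (0:ℝ)..R, Q y := by
      apply intervalIntegral.integral_nonneg hR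
      intro y _
      positivity
    linarith [hFTC, hsplit, hF0]
  -- the boundary term is frequently small
  have hfreq : ∀ ε : ℝ, 0 < ε → ∃ᶠ R in atTop, F R < ε := by
    intro ε hε
    by_contra hcon
    simp only [not_frequently, not_lt] at hcon
    rw [eventually_atTop] at hcon
    obtain ⟨Y, hY⟩ := hcon
    set M : ℝ := max Y 1 with hM
    have hM0 : (0 : ℝ) < M := lt_of_lt_of_le one_pos (le_max_right _ _)
    have hii : IntegrableOn (fun y : ℝ => 2 * s * ε * y⁻¹) (Ioi M) := by
      apply Integrable.mono' (h2.mono_set (Ioi_subset_Ioi hM0.le))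
      · exact (measurable_inv.const_mul (2 * s * ε)).aestronglyMeasurable
      · filter_upwards [ae_restrict_mem measurableSet_Ioi] with y hy
        have hy0 : (0 : ℝ) < y := lt_trans hM0 hy
        have hFy : ε ≤ F y := hY y (le_trans (le_max_left _ _) hy.le)
        have hFval : F y = 1 / (2 * s) * (y * f y ^ 2 * E y) := rfl
        have h2s : (0:ℝ) < 2 * s := by linarith
        have : 2 * s * ε ≤ y * g2 y := by
          have := hFy
          rw [hFval] at this
          have h' : 2 * s * ε ≤ 2 * s * (1 / (2 * s) * (y * f y ^ 2 * E y)) :=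
            (mul_le_mul_iff_right₀ h2s).mpr this
          calc 2 * s * ε ≤ 2 * s * (1 / (2 * s) * (y * f y ^ 2 * E y)) := h'
            _ = y * g2 y := by field_simp [hg2]; ring
        have hnorm : ‖2 * s * ε * y⁻¹‖ = 2 * s * ε * y⁻¹ := by
          rw [Real.norm_eq_abs, abs_of_nonneg]
          positivity
        rw [hnorm]
        rw [← mul_le_mul_iff_left₀ hy0]
        calc 2 * s * ε * y⁻¹ * y = 2 * s * ε := by field_simp
          _ ≤ y * g2 y := this
          _ = g2 y * y := by ring
    have hnot : ¬ IntegrableOn (fun y : ℝ => 2 * s * ε * y⁻¹) (Ioi M) := by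
      intro h
      have hne : (2 * s * ε) ≠ 0 := by positivity
      have h' : IntegrableOn (fun y : ℝ => y⁻¹) (Ioi M) := by
        exact (h.const_mul (2 * s * ε)⁻¹).congr
          (Eventually.of_forall fun y => inv_mul_cancel_left₀ hne y⁻¹)
      have hcongr : IntegrableOn (fun y : ℝ => y ^ (-1 : ℝ)) (Ioi M) := by
        refine h'.congr_fun ?_ measurableSet_Ioi
        intro y hy
        exact (Real.rpow_neg_one y).symm
      rw [integrableOn_Ioi_rpow_iff hM0] at hcongr
      linarith
    exact hnot hii
  -- pass to the limit
  have hT2 : Tendsto (fun R => ∫ y in (0:ℝ)..R, g2 y) atTop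
      (nhds (∫ y in Ioi (0:ℝ), g2 y)) :=
    intervalIntegral_tendsto_integral_Ioi 0 h2 tendsto_id
  have hT1 : Tendsto (fun R => ∫ y in (0:ℝ)..R, g1 y) atTop
      (nhds (∫ y in Ioi (0:ℝ), g1 y)) :=
    intervalIntegral_tendsto_integral_Ioi 0 h1 tendsto_id
  set L : ℝ := 1 / (2 * s) * (∫ y in Ioi (0:ℝ), g2 y) - ∫ y in Ioi (0:ℝ), g1 y with hL
  have hTL : Tendsto (fun R => 1 / (2 * s) * (∫ y in (0:ℝ)..R, g2 y)
      - (∫ y in (0:ℝ)..R, g1 y)) atTop (nhds L) :=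
    (hT2.const_mul _).sub hT1
  by_contra hcontra
  push_neg at hcontra
  have hLpos : 0 < L := by simp only [hL]; linarith
  have hev : ∀ᶠ R in atTop, L / 2 < 1 / (2 * s) * (∫ y in (0:ℝ)..R, g2 y)
      - (∫ y in (0:ℝ)..R, g1 y) :=
    hTL.eventually (eventually_gt_nhds (half_lt_self hLpos))
  obtain ⟨R, hR1, hR2, hR3⟩ :=
    ((hfreq (L / 2) (by linarith)).and_eventually (hev.and (eventually_ge_atTop 0))).exists
  linarith [key R hR3]

/-- Weighted Poincaré-type inequality on `ℝᵈ × ℝ₊` with weight `e^{2Ψ}`, `Ψ = y²/(8⟨t⟩)`. -/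
theorem weighted_poincare (d : ℕ) (t : ℝ) (ht : 0 ≤ t)
    (u : (Fin d → ℝ) → ℝ → ℝ)
    (hu : ∀ X, ContDiff ℝ (⊤ : ℕ∞) (u X))
    (hdecay : ∀ X, Tendsto
      (fun y => u X y * Real.exp (y ^ 2 / (8 * Real.sqrt (1 + t ^ 2)))) atTop (nhds 0))
    (hint1 : Integrable (fun p : (Fin d → ℝ) × ℝ =>
      (deriv (u p.1) p.2) ^ 2 * Real.exp (2 * (p.2 ^ 2 / (8 * Real.sqrt (1 + t ^ 2))))))
    (hint2 : Integrable (fun p : (Fin d → ℝ) × ℝ =>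
      (u p.1 p.2) ^ 2 * Real.exp (2 * (p.2 ^ 2 / (8 * Real.sqrt (1 + t ^ 2)))))) :
    (1 / (2 * Real.sqrt (1 + t ^ 2))) *
        ∫ X : Fin d → ℝ, ∫ y in Ioi (0 : ℝ),
          (u X y) ^ 2 * Real.exp (2 * (y ^ 2 / (8 * Real.sqrt (1 + t ^ 2)))) ≤
      ∫ X : Fin d → ℝ, ∫ y in Ioi (0 : ℝ),
        (deriv (u X) y) ^ 2 * Real.exp (2 * (y ^ 2 / (8 * Real.sqrt (1 + t ^ 2)))) := by
  set s : ℝ := Real.sqrt (1 + t ^ 2) with hsdef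
  have hs : 0 < s := Real.sqrt_pos.mpr (by positivity)
  have h2' : Integrable (fun p : (Fin d → ℝ) × ℝ =>
      (u p.1 p.2) ^ 2 * Real.exp (2 * (p.2 ^ 2 / (8 * s))))
      (volume.prod (volume.restrict (Ioi 0))) := by
    have h := hint2.restrict (s := (univ : Set (Fin d → ℝ)) ×ˢ Ioi (0:ℝ))
    rwa [Measure.volume_eq_prod, ← Measure.prod_restrict, Measure.restrict_univ] at h
  have h1' : Integrable (fun p : (Fin d → ℝ) × ℝ =>
      (deriv (u p.1) p.2) ^ 2 * Real.exp (2 * (p.2 ^ 2 / (8 * s))))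
      (volume.prod (volume.restrict (Ioi 0))) := by
    have h := hint1.restrict (s := (univ : Set (Fin d → ℝ)) ×ˢ Ioi (0:ℝ))
    rwa [Measure.volume_eq_prod, ← Measure.prod_restrict, Measure.restrict_univ] at h
  have h2sec := h2'.prod_right_ae
  have h1sec := h1'.prod_right_ae
  have hF2 : Integrable (fun X : Fin d → ℝ =>
      ∫ y in Ioi (0:ℝ), (u X y) ^ 2 * Real.exp (2 * (y ^ 2 / (8 * s)))) volume :=
    h2'.integral_prod_left
  have hF1 : Integrable (fun X : Fin d → ℝ =>
      ∫ y in Ioi (0:ℝ), (deriv (u X) y) ^ 2 * Real.exp (2 * (y ^ 2 / (8 * s)))) volume :=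
    h1'.integral_prod_left
  have hae : ∀ᵐ X : Fin d → ℝ,
      (1 / (2 * s)) * ∫ y in Ioi (0:ℝ), (u X y) ^ 2 * Real.exp (2 * (y ^ 2 / (8 * s))) ≤
        ∫ y in Ioi (0:ℝ), (deriv (u X) y) ^ 2 * Real.exp (2 * (y ^ 2 / (8 * s))) := by
    filter_upwards [h2sec, h1sec] with X hX2 hX1
    exact weighted_poincare_oneDim s hs (u X) (hu X) hX2 hX1
  rw [← MeasureTheory.integral_const_mul]
  exact integral_mono_ae (hF2.const_mul _) hF1 hae
end

section
/- Let d ≥ 0 be an integer, κ ∈ (0,1), and let u : ℝᵈ × ℝ₊ → ℝ be smooth decaying to zero sufficiently fast as y → +∞. Then with Ψ(y) := y²/(8⟨t⟩), one has ∫ |∂_y u|² e^{2Ψ} dX dy ≥ (κ/(2⟨t⟩)) ∫ |u|² e^{2Ψ} dX dy + (κ(1−κ)/4) ∫ |(y/⟨t⟩) u|² e^{2Ψ} dX dy, where integrals are over ℝᵈ × ℝ₊. -/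
open MeasureTheory Filter Real Set

private lemma sq_div_helper (c : ℝ) (hc : c ≠ 0) (y v E : ℝ) :
    c ^ 2 * ((y / c * v) ^ 2 * E) = y ^ 2 * v ^ 2 * E := by
  field_simp

/-- Slice version: weighted Poincaré inequality on `Ioi 0` for a single function. -/
lemma slice_ineq (c κ : ℝ) (hc : 0 < c) (hκ0 : 0 < κ) (hκ1 : κ < 1)
    (f : ℝ → ℝ) (hf : ContDiff ℝ (⊤ : ℕ∞) f)
    (hA : IntegrableOn (fun y => (deriv f y) ^ 2 * Real.exp (2 * (y ^ 2 / (8 * c)))) (Ioi 0))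
    (hB : IntegrableOn (fun y => (f y) ^ 2 * Real.exp (2 * (y ^ 2 / (8 * c)))) (Ioi 0))
    (hC : IntegrableOn (fun y => ((y / c) * f y) ^ 2 * Real.exp (2 * (y ^ 2 / (8 * c))))
      (Ioi 0)) :
    κ / (2 * c) * (∫ y in Ioi (0 : ℝ), (f y) ^ 2 * Real.exp (2 * (y ^ 2 / (8 * c)))) +
      κ * (1 - κ) / 4 *
        (∫ y in Ioi (0 : ℝ), ((y / c) * f y) ^ 2 * Real.exp (2 * (y ^ 2 / (8 * c)))) ≤
      ∫ y in Ioi (0 : ℝ), (deriv f y) ^ 2 * Real.exp (2 * (y ^ 2 / (8 * c))) := by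
  have hcne : c ≠ 0 := ne_of_gt hc
  set E : ℝ → ℝ := fun y => Real.exp (2 * (y ^ 2 / (8 * c))) with hEdef
  show κ / (2 * c) * (∫ y in Ioi (0 : ℝ), (f y) ^ 2 * E y) +
      κ * (1 - κ) / 4 * (∫ y in Ioi (0 : ℝ), ((y / c) * f y) ^ 2 * E y) ≤
      ∫ y in Ioi (0 : ℝ), (deriv f y) ^ 2 * E y
  have hA : IntegrableOn (fun y => (deriv f y) ^ 2 * E y) (Ioi 0) := hA
  have hB : IntegrableOn (fun y => (f y) ^ 2 * E y) (Ioi 0) := hB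
  have hC : IntegrableOn (fun y => ((y / c) * f y) ^ 2 * E y) (Ioi 0) := hC
  have hEpos : ∀ y, 0 < E y := fun y => Real.exp_pos _
  have hfc : Continuous f := hf.continuous
  have hfd : Differentiable ℝ f := hf.differentiable (by simp)
  have hdc : Continuous (deriv f) := hf.continuous_deriv (by simp)
  have hEcont : Continuous E := by
    apply Real.continuous_exp.comp
    fun_prop
  -- derivative of the weight
  have hEderiv : ∀ y, HasDerivAt E (y / (2 * c) * E y) y := by
    intro y
    have h1 : HasDerivAt (fun y : ℝ => 2 * (y ^ 2 / (8 * c))) (y / (2 * c)) y := by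
      have := ((hasDerivAt_pow 2 y).div_const (8 * c)).const_mul 2
      refine this.congr_deriv ?_
      norm_num
      field_simp
      ring
    have := h1.exp
    refine this.congr_deriv ?_
    ring
  -- derivative of g y = y * f y ^ 2 * E y
  set h : ℝ → ℝ := fun y =>
    ((f y) ^ 2 * E y + 2 * y * f y * deriv f y * E y) +
      (1 / (2 * c)) * (y ^ 2 * (f y) ^ 2 * E y) with hhdef
  have hgderiv : ∀ y, HasDerivAt (fun y => y * (f y) ^ 2 * E y) (h y) y := by
    intro y
    have hf2 : HasDerivAt (fun y => (f y) ^ 2) (2 * f y * deriv f y) y := by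
      have := ((hfd y).hasDerivAt).pow 2
      refine this.congr_deriv ?_
      norm_num
    have h1 : HasDerivAt (fun y => y * (f y) ^ 2)
        (1 * (f y) ^ 2 + y * (2 * f y * deriv f y)) y := (hasDerivAt_id y).mul hf2
    have h2 := h1.mul (hEderiv y)
    refine h2.congr_deriv ?_
    simp only [hhdef]
    ring
  have hhcont : Continuous h := by
    simp only [hhdef]
    fun_prop
  -- integrability pieces
  have hYint : IntegrableOn (fun y => y ^ 2 * (f y) ^ 2 * E y) (Ioi 0) := by
    have heq : (fun y => c ^ 2 * (((y / c) * f y) ^ 2 * E y)) =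
        fun y => y ^ 2 * (f y) ^ 2 * E y := by
      funext y
      exact sq_div_helper c hcne y (f y) (E y)
    exact heq ▸ (hC.const_mul (c ^ 2))
  have hPint : IntegrableOn (fun y => 2 * y * f y * deriv f y * E y) (Ioi 0) := by
    apply Integrable.mono' (hA.add hYint)
    · apply Continuous.aestronglyMeasurable
      fun_prop
    · refine ae_of_all _ fun y => ?_
      have hE0 : (0 : ℝ) ≤ E y := (hEpos y).le
      simp only [Pi.add_apply]
      rw [Real.norm_eq_abs, abs_le]
      constructor <;>
        nlinarith [mul_nonneg (sq_nonneg (deriv f y + y * f y)) hE0,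
          mul_nonneg (sq_nonneg (deriv f y - y * f y)) hE0]
  have hhint : IntegrableOn h (Ioi 0) :=
    (hB.add hPint).add (hYint.const_mul (1 / (2 * c)))
  -- FTC and the boundary limit
  have hFTC : ∀ R : ℝ, ∫ y in (0 : ℝ)..R, h y = R * (f R) ^ 2 * E R := by
    intro R
    have := intervalIntegral.integral_eq_sub_of_hasDerivAt
      (f := fun y => y * (f y) ^ 2 * E y) (f' := h)
      (fun x _ => hgderiv x) (hhcont.intervalIntegrable 0 R)
    rw [this]
    simp
  have key : Tendsto (fun R => R * (f R) ^ 2 * E R) atTop (nhds (∫ y in Ioi (0 : ℝ), h y)) := by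
    have h2 := MeasureTheory.intervalIntegral_tendsto_integral_Ioi 0 hhint tendsto_id
    simpa only [hFTC, id_eq] using h2
  set L := ∫ y in Ioi (0 : ℝ), h y with hLdef
  have hL0 : 0 ≤ L := by
    refine ge_of_tendsto key ?_
    filter_upwards [eventually_ge_atTop (0 : ℝ)] with R hR
    exact mul_nonneg (mul_nonneg hR (sq_nonneg _)) (hEpos R).le
  have hLeq0 : L = 0 := by
    by_contra hne
    have hLpos : 0 < L := lt_of_le_of_ne hL0 (Ne.symm hne)
    have h3 : Tendsto (fun R => R * (R * (f R) ^ 2 * E R)) atTop atTop :=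
      Filter.Tendsto.atTop_mul_pos hLpos tendsto_id key
    obtain ⟨a, ha⟩ := (h3.eventually (eventually_ge_atTop 1)).exists_forall_of_atTop
    set b := max a 1 with hbdef
    have hb0 : (0 : ℝ) ≤ b := le_trans zero_le_one (le_max_right a 1)
    have hconst : IntegrableOn (fun _ : ℝ => (1 : ℝ)) (Ioi b) := by
      apply Integrable.mono' (hYint.mono_set (Ioi_subset_Ioi hb0))
      · exact aestronglyMeasurable_const
      · rw [ae_restrict_iff' measurableSet_Ioi]
        refine ae_of_all _ fun y hy => ?_
        have h1y : 1 ≤ y * (y * (f y) ^ 2 * E y) :=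
          ha y (le_trans (le_max_left a 1) hy.le)
        have : y * (y * (f y) ^ 2 * E y) = y ^ 2 * (f y) ^ 2 * E y := by ring
        rw [norm_one]
        linarith [this ▸ h1y]
    rw [IntegrableOn, integrable_const_iff] at hconst
    rcases hconst with h | h
    · exact one_ne_zero h
    · have h := measure_lt_top (volume.restrict (Ioi b)) univ
      rw [Measure.restrict_apply_univ, Real.volume_Ioi] at h
      exact (lt_irrefl _ h)
  -- the integration-by-parts identity
  set B' := ∫ y in Ioi (0 : ℝ), (f y) ^ 2 * E y with hB'def
  set P := ∫ y in Ioi (0 : ℝ), 2 * y * f y * deriv f y * E y with hPdef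
  set Y := ∫ y in Ioi (0 : ℝ), y ^ 2 * (f y) ^ 2 * E y with hYdef
  set A' := ∫ y in Ioi (0 : ℝ), (deriv f y) ^ 2 * E y with hA'def
  set C' := ∫ y in Ioi (0 : ℝ), ((y / c) * f y) ^ 2 * E y with hC'def
  have hident : B' + P + (1 / (2 * c)) * Y = 0 := by
    have hBP : IntegrableOn (fun y => (f y) ^ 2 * E y + 2 * y * f y * deriv f y * E y)
        (Ioi 0) := hB.add hPint
    have : L = B' + P + (1 / (2 * c)) * Y := by
      simp only [hLdef, hhdef]
      rw [integral_add hBP (hYint.const_mul (1 / (2 * c))),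
        integral_add hB hPint, integral_const_mul, hB'def, hPdef, hYdef]
    rw [← this, hLeq0]
  have hYC : Y = c ^ 2 * C' := by
    rw [hYdef]
    calc (∫ y in Ioi (0 : ℝ), y ^ 2 * (f y) ^ 2 * E y)
        = ∫ y in Ioi (0 : ℝ), c ^ 2 * (((y / c) * f y) ^ 2 * E y) := by
          apply setIntegral_congr_fun measurableSet_Ioi
          intro y _
          exact (sq_div_helper c hcne y (f y) (E y)).symm
      _ = c ^ 2 * C' := by rw [integral_const_mul]
  -- the nonnegative square
  set m := κ / (2 * c) with hmdef
  have hQ0 : 0 ≤ A' + m * P + m ^ 2 * Y := by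
    have hsq : 0 ≤ ∫ y in Ioi (0 : ℝ),
        ((deriv f y) ^ 2 * E y +
          (m * (2 * y * f y * deriv f y * E y) + m ^ 2 * (y ^ 2 * (f y) ^ 2 * E y))) := by
      apply setIntegral_nonneg measurableSet_Ioi
      intro y _
      have : (deriv f y) ^ 2 * E y +
          (m * (2 * y * f y * deriv f y * E y) + m ^ 2 * (y ^ 2 * (f y) ^ 2 * E y)) =
          (deriv f y + m * y * f y) ^ 2 * E y := by ring
      rw [this]
      positivity
    have hPY : IntegrableOn (fun y => m * (2 * y * f y * deriv f y * E y) +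
        m ^ 2 * (y ^ 2 * (f y) ^ 2 * E y)) (Ioi 0) :=
      (hPint.const_mul m).add (hYint.const_mul (m ^ 2))
    have hPm : IntegrableOn (fun y => m * (2 * y * f y * deriv f y * E y)) (Ioi 0) :=
      hPint.const_mul m
    have hYm : IntegrableOn (fun y => m ^ 2 * (y ^ 2 * (f y) ^ 2 * E y)) (Ioi 0) :=
      hYint.const_mul (m ^ 2)
    rw [integral_add hA hPY, integral_add hPm hYm,
      integral_const_mul, integral_const_mul, ← hA'def, ← hPdef, ← hYdef] at hsq
    linarith [hsq]
  -- final arithmetic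
  have hP' : P = -B' - (1 / (2 * c)) * (c ^ 2 * C') := by
    rw [← hYC]; linarith
  have keyineq : 0 ≤ A' + m * (-B' - (1 / (2 * c)) * (c ^ 2 * C')) + m ^ 2 * (c ^ 2 * C') := by
    rw [← hP', ← hYC]; exact hQ0
  have e1 : m * (-B' - (1 / (2 * c)) * (c ^ 2 * C')) = -(κ / (2 * c)) * B' - (κ / 4) * C' := by
    rw [hmdef]; field_simp; ring
  have e2 : m ^ 2 * (c ^ 2 * C') = (κ ^ 2 / 4) * C' := by
    rw [hmdef]; field_simp; ring
  rw [e1, e2] at keyineq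
  have e3 : κ * (1 - κ) / 4 * C' = (κ / 4) * C' - (κ ^ 2 / 4) * C' := by ring
  linarith [keyineq]

/-- Refined weighted Poincaré-type inequality with parameter `κ ∈ (0,1)`. -/
theorem weighted_poincare_kappa (d : ℕ) (t κ : ℝ) (ht : 0 ≤ t) (hκ0 : 0 < κ) (hκ1 : κ < 1)
    (u : (Fin d → ℝ) → ℝ → ℝ)
    (hu : ∀ X, ContDiff ℝ (⊤ : ℕ∞) (u X))
    (hdecay : ∀ X, Tendsto
      (fun y => u X y * Real.exp (y ^ 2 / (8 * Real.sqrt (1 + t ^ 2)))) atTop (nhds 0))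
    (hint1 : Integrable (fun p : (Fin d → ℝ) × ℝ =>
      (deriv (u p.1) p.2) ^ 2 * Real.exp (2 * (p.2 ^ 2 / (8 * Real.sqrt (1 + t ^ 2))))))
    (hint2 : Integrable (fun p : (Fin d → ℝ) × ℝ =>
      (u p.1 p.2) ^ 2 * Real.exp (2 * (p.2 ^ 2 / (8 * Real.sqrt (1 + t ^ 2))))))
    (hint3 : Integrable (fun p : (Fin d → ℝ) × ℝ =>
      ((p.2 / Real.sqrt (1 + t ^ 2)) * u p.1 p.2) ^ 2 *
        Real.exp (2 * (p.2 ^ 2 / (8 * Real.sqrt (1 + t ^ 2)))))) :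
    (κ / (2 * Real.sqrt (1 + t ^ 2))) *
        (∫ X : Fin d → ℝ, ∫ y in Ioi (0 : ℝ),
          (u X y) ^ 2 * Real.exp (2 * (y ^ 2 / (8 * Real.sqrt (1 + t ^ 2))))) +
      (κ * (1 - κ) / 4) *
        (∫ X : Fin d → ℝ, ∫ y in Ioi (0 : ℝ),
          ((y / Real.sqrt (1 + t ^ 2)) * u X y) ^ 2 *
            Real.exp (2 * (y ^ 2 / (8 * Real.sqrt (1 + t ^ 2))))) ≤
      ∫ X : Fin d → ℝ, ∫ y in Ioi (0 : ℝ),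
        (deriv (u X) y) ^ 2 * Real.exp (2 * (y ^ 2 / (8 * Real.sqrt (1 + t ^ 2)))) := by
  set c := Real.sqrt (1 + t ^ 2) with hcdef
  have hc : 0 < c := Real.sqrt_pos.mpr (by positivity)
  -- restrict the product integrability to ℝᵈ × Ioi 0
  have restr : ∀ F : (Fin d → ℝ) × ℝ → ℝ, Integrable F →
      Integrable F ((volume : Measure (Fin d → ℝ)).prod (volume.restrict (Ioi (0 : ℝ)))) := by
    intro F hF
    have := hF.restrict (s := (univ : Set (Fin d → ℝ)) ×ˢ Ioi (0 : ℝ))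
    rwa [Measure.volume_eq_prod, ← Measure.prod_restrict, Measure.restrict_univ] at this
  have h1' := restr _ hint1
  have h2' := restr _ hint2
  have h3' := restr _ hint3
  -- a.e. slice inequality
  have hae : ∀ᵐ X : Fin d → ℝ,
      κ / (2 * c) * (∫ y in Ioi (0 : ℝ), (u X y) ^ 2 * Real.exp (2 * (y ^ 2 / (8 * c)))) +
        κ * (1 - κ) / 4 *
          (∫ y in Ioi (0 : ℝ), ((y / c) * u X y) ^ 2 * Real.exp (2 * (y ^ 2 / (8 * c)))) ≤
        ∫ y in Ioi (0 : ℝ), (deriv (u X) y) ^ 2 * Real.exp (2 * (y ^ 2 / (8 * c))) := by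
    filter_upwards [h1'.prod_right_ae, h2'.prod_right_ae, h3'.prod_right_ae]
      with X hX1 hX2 hX3
    exact slice_ineq c κ hc hκ0 hκ1 (u X) (hu X) hX1 hX2 hX3
  -- integrability of the marginal functions
  have hAint := h1'.integral_prod_left
  have hBint := h2'.integral_prod_left
  have hCint := h3'.integral_prod_left
  have main := integral_mono_ae ((hBint.const_mul (κ / (2 * c))).add
    (hCint.const_mul (κ * (1 - κ) / 4))) hAint hae
  have hBm : Integrable (fun X => (κ / (2 * c)) *
      ∫ y in Ioi (0 : ℝ), (u X y) ^ 2 * Real.exp (2 * (y ^ 2 / (8 * c)))) :=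
    hBint.const_mul _
  have hCm : Integrable (fun X => (κ * (1 - κ) / 4) *
      ∫ y in Ioi (0 : ℝ), ((y / c) * u X y) ^ 2 * Real.exp (2 * (y ^ 2 / (8 * c)))) :=
    hCint.const_mul _
  dsimp only [Pi.add_apply] at main
  rw [integral_add hBm hCm, integral_const_mul, integral_const_mul] at main
  exact main
end
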